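/- arXiv:1810.06311 — 2 statements merged into one kernel-verified Lean document; each statement's English description precedes it below -/
import Mathlib

section
/- The pair v(x,t) = (λ²/8)(1 - 4 sech²(λ(x + λ²t/2)/2)), w(x,t) = λ sech(λ(x + λ²t/2)/2) is an exact solution of the classical coupled Jaulent–Miodek system: v_t + v_{xxx} + (3/2) w w_{xxx} + (9/2) w_x w_{xx} - 6 v v_x - 6 v w w_x - (3/2) v_x w² = 0 and w_t + w_{xxx} - 6 v_x w - 6 v w_x - (15/2) w_x w² = 0. -/
/-!
Both fields are functions of the phase `u = λ/2 · x + λ³/4 · t`, so each `x`-derivative contributes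
a factor `λ/2` and the `t`-derivative a factor `λ³/4`. Since `sech' = -sech · tanh` and
`tanh' = sech²`, the derivatives of the profiles are polynomials in `sech u` and `tanh u`, and once
`tanh²` is eliminated via `sech² + tanh² = 1` both equations become polynomial identities.
-/

noncomputable def sech (z : ℝ) : ℝ := 1 / Real.cosh z

open Real

lemma sech_eq_inv_cosh : sech = cosh⁻¹ := by
  ext u; simp [sech]

lemma hasDerivAt_sech (u : ℝ) : HasDerivAt sech (-sech u * tanh u) u := by
  rw [sech_eq_inv_cosh]
  refine ((hasDerivAt_cosh u).inv (cosh_pos u).ne').congr_deriv ?_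
  rw [Pi.inv_apply, tanh_eq_sinh_div_cosh]
  ring

lemma Real.hasDerivAt_tanh (u : ℝ) : HasDerivAt tanh (sech u ^ 2) u := by
  rw [show tanh = sinh / cosh from funext tanh_eq_sinh_div_cosh]
  refine ((hasDerivAt_sinh u).div (hasDerivAt_cosh u) (cosh_pos u).ne').congr_deriv ?_
  rw [sech_eq_inv_cosh, Pi.inv_apply, inv_pow, ← one_div, ← cosh_sq_sub_sinh_sq u]
  ring

lemma sech_sq_add_tanh_sq (u : ℝ) : sech u ^ 2 + tanh u ^ 2 = 1 := by
  rw [sech_eq_inv_cosh, Pi.inv_apply, tanh_eq_sinh_div_cosh]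
  field_simp
  linear_combination -cosh_sq_sub_sinh_sq u

@[fun_prop]
lemma contDiff_sech {n : WithTop ℕ∞} : ContDiff ℝ n sech := by
  rw [sech_eq_inv_cosh]
  exact contDiff_cosh.inv fun u => (cosh_pos u).ne'

lemma iteratedDeriv_comp_mul_add {f : ℝ → ℝ} {n : ℕ} (hf : ContDiff ℝ n f) (a b : ℝ) :
    iteratedDeriv n (fun y => f (a * y + b)) = fun y => a ^ n * iteratedDeriv n f (a * y + b) := by
  rw [iteratedDeriv_comp_const_mul (f := fun z => f (z + b)) (hf.comp (contDiff_id.add contDiff_const)),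
    iteratedDeriv_comp_add_const]

lemma deriv_comp_add_mul (f : ℝ → ℝ) (b c s : ℝ) :
    deriv (fun s => f (b + c * s)) s = c * deriv f (b + c * s) := by
  rw [deriv_comp_mul_left (f := fun z => f (b + z)), deriv_comp_const_add, smul_eq_mul]

lemma iteratedDeriv_succ_eq_of_hasDerivAt {f g g' : ℝ → ℝ} {n : ℕ} (hf : iteratedDeriv n f = g)
    (hg : ∀ u, HasDerivAt g (g' u) u) : iteratedDeriv (n + 1) f = g' := by
  rw [iteratedDeriv_succ, hf]
  exact funext fun u => (hg u).deriv

noncomputable def solitonV (lam u : ℝ) : ℝ := lam ^ 2 / 8 * (1 - 4 * sech u ^ 2)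

noncomputable def solitonW (lam u : ℝ) : ℝ := lam * sech u

section SolitonDerivatives

variable (lam : ℝ)

lemma contDiff_solitonV {n : WithTop ℕ∞} : ContDiff ℝ n (solitonV lam) := by
  unfold solitonV; fun_prop

lemma contDiff_solitonW {n : WithTop ℕ∞} : ContDiff ℝ n (solitonW lam) := by
  unfold solitonW; fun_prop

lemma iteratedDeriv_one_solitonW :
    iteratedDeriv 1 (solitonW lam) = fun u => -lam * sech u * tanh u :=
  iteratedDeriv_succ_eq_of_hasDerivAt iteratedDeriv_zero fun u =>
    ((hasDerivAt_sech u).const_mul lam).congr_deriv (by ring)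

lemma iteratedDeriv_two_solitonW :
    iteratedDeriv 2 (solitonW lam) = fun u => lam * (sech u - 2 * sech u ^ 3) :=
  iteratedDeriv_succ_eq_of_hasDerivAt (iteratedDeriv_one_solitonW lam) fun u =>
    (((hasDerivAt_sech u).const_mul (-lam)).mul (hasDerivAt_tanh u)).congr_deriv
      (by linear_combination lam * sech u * sech_sq_add_tanh_sq u)

lemma iteratedDeriv_three_solitonW :
    iteratedDeriv 3 (solitonW lam) = fun u => lam * sech u * tanh u * (6 * sech u ^ 2 - 1) :=
  iteratedDeriv_succ_eq_of_hasDerivAt (iteratedDeriv_two_solitonW lam) fun u =>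
    (((hasDerivAt_sech u).sub (((hasDerivAt_sech u).pow 3).const_mul 2)).const_mul lam).congr_deriv
      (by ring)

lemma iteratedDeriv_one_solitonV :
    iteratedDeriv 1 (solitonV lam) = fun u => lam ^ 2 * sech u ^ 2 * tanh u :=
  iteratedDeriv_succ_eq_of_hasDerivAt iteratedDeriv_zero fun u =>
    (((((hasDerivAt_sech u).pow 2).const_mul 4).const_sub 1).const_mul (lam ^ 2 / 8)).congr_deriv
      (by ring)

lemma iteratedDeriv_two_solitonV :
    iteratedDeriv 2 (solitonV lam) = fun u => lam ^ 2 * (3 * sech u ^ 4 - 2 * sech u ^ 2) :=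
  iteratedDeriv_succ_eq_of_hasDerivAt (iteratedDeriv_one_solitonV lam) fun u =>
    ((((hasDerivAt_sech u).pow 2).const_mul (lam ^ 2)).mul (hasDerivAt_tanh u)).congr_deriv
      (by rw [Pi.pow_apply]; linear_combination -2 * lam ^ 2 * sech u ^ 2 * sech_sq_add_tanh_sq u)

lemma iteratedDeriv_three_solitonV :
    iteratedDeriv 3 (solitonV lam) = fun u => lam ^ 2 * sech u ^ 2 * tanh u * (4 - 12 * sech u ^ 2) :=
  iteratedDeriv_succ_eq_of_hasDerivAt (iteratedDeriv_two_solitonV lam) fun u =>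
    (((((hasDerivAt_sech u).pow 4).const_mul 3).sub (((hasDerivAt_sech u).pow 2).const_mul 2)).const_mul
      (lam ^ 2)).congr_deriv (by ring)

end SolitonDerivatives

/-- The travelling-wave pair `(v, w)` is an exact solution of the classical
coupled Jaulent–Miodek system. -/
theorem jaulent_miodek_exact_solution (lam : ℝ)
    (v w : ℝ → ℝ → ℝ)
    (hv : v = fun x t => (lam ^ 2 / 8) * (1 - 4 * sech (lam * (x + lam ^ 2 * t / 2) / 2) ^ 2))
    (hw : w = fun x t => lam * sech (lam * (x + lam ^ 2 * t / 2) / 2)) :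
    ∀ x t : ℝ,
      (deriv (fun s => v x s) t
        + iteratedDeriv 3 (fun y => v y t) x
        + (3 / 2) * w x t * iteratedDeriv 3 (fun y => w y t) x
        + (9 / 2) * deriv (fun y => w y t) x * iteratedDeriv 2 (fun y => w y t) x
        - 6 * v x t * deriv (fun y => v y t) x
        - 6 * v x t * w x t * deriv (fun y => w y t) x
        - (3 / 2) * deriv (fun y => v y t) x * w x t ^ 2 = 0)
      ∧ (deriv (fun s => w x s) t
        + iteratedDeriv 3 (fun y => w y t) x
        - 6 * deriv (fun y => v y t) x * w x t
        - 6 * v x t * deriv (fun y => w y t) x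
        - (15 / 2) * deriv (fun y => w y t) x * w x t ^ 2 = 0) := by
  have phase : ∀ y s, lam * (y + lam ^ 2 * s / 2) / 2 = lam / 2 * y + lam ^ 3 / 4 * s :=
    fun y s => by ring
  have hv' : ∀ y s, v y s = solitonV lam (lam / 2 * y + lam ^ 3 / 4 * s) := by
    simp only [hv, phase, solitonV, implies_true]
  have hw' : ∀ y s, w y s = solitonW lam (lam / 2 * y + lam ^ 3 / 4 * s) := by
    simp only [hw, phase, solitonW, implies_true]
  intro x t
  simp only [hv', hw', deriv_comp_add_mul]
  simp only [← iteratedDeriv_one, iteratedDeriv_comp_mul_add (contDiff_solitonV lam),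
    iteratedDeriv_comp_mul_add (contDiff_solitonW lam),
    iteratedDeriv_one_solitonV, iteratedDeriv_three_solitonV,
    iteratedDeriv_one_solitonW, iteratedDeriv_two_solitonW, iteratedDeriv_three_solitonW]
  simp only [solitonV, solitonW]
  constructor <;> ring
end

section
/- Generalized Taylor formula (one term): if 0 < α ≤ 1 and f, D^α f are continuous on [a,b] with D^α f bounded, then for every t in (a,b] there exists ξ ∈ [a,t] such that f(t) = f(a) + ((t-a)^α / Γ(α+1)) · (D^α f)(ξ), where D^α is the Caputo derivative based at a. -/
/-- Caputo fractional derivative of order `0 < α ≤ 1` based at `a`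
(with `D^1 f = f'`). -/
noncomputable def caputoAt (a α : ℝ) (f : ℝ → ℝ) (t : ℝ) : ℝ :=
  if α = 1 then deriv f t
  else (1 / Real.Gamma (1 - α)) * ∫ τ in a..t, (t - τ) ^ (-α) * deriv f τ

/-!
For `α = 1` this is the mean value theorem. For `0 < α < 1`, integrate `D^α f` against the
weight `(t - s)^(α - 1)`: after exchanging the integrals, the inner integral
`∫_τ^t (t - s)^(α - 1) (s - τ)^(-α) ds` is the Beta value `Γ(α) Γ(1 - α)`, so the weighted
integral is `Γ(α) (f t - f a)` by the fundamental theorem of calculus. The weight has total mass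
`(t - a)^α / α`, and `α Γ(α) = Γ(α + 1)`, so the weighted mean value theorem for the continuous
function `D^α f` produces `ξ`.
-/

open MeasureTheory intervalIntegral Set

section Beta

variable {p q : ℝ}

theorem ofReal_rpow_mul_one_sub_rpow {u : ℝ} (hu : u ∈ uIcc (0 : ℝ) 1) :
    ((u ^ (p - 1) * (1 - u) ^ (q - 1) : ℝ) : ℂ)
      = (u : ℂ) ^ ((p : ℂ) - 1) * (1 - (u : ℂ)) ^ ((q : ℂ) - 1) := by
  rw [uIcc_of_le zero_le_one] at hu
  rw [Complex.ofReal_mul, Complex.ofReal_cpow hu.1, Complex.ofReal_cpow (sub_nonneg.2 hu.2)]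
  push_cast
  ring

theorem intervalIntegrable_rpow_mul_one_sub_rpow (hp : 0 < p) (hq : 0 < q) :
    IntervalIntegrable (fun u : ℝ => u ^ (p - 1) * (1 - u) ^ (q - 1)) volume 0 1 := by
  refine ((Complex.betaIntegral_convergent (u := p) (v := q) (by simpa) (by simpa)).norm).congr
    fun u hu => ?_
  rw [uIoc_of_le zero_le_one] at hu
  rw [← ofReal_rpow_mul_one_sub_rpow (by rw [uIcc_of_le zero_le_one]; exact Ioc_subset_Icc_self hu),
    Complex.norm_real, Real.norm_of_nonneg]
  exact mul_nonneg (Real.rpow_nonneg hu.1.le _) (Real.rpow_nonneg (sub_nonneg.2 hu.2) _)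

theorem integral_rpow_mul_one_sub_rpow (hp : 0 < p) (hq : 0 < q) :
    ∫ u in (0 : ℝ)..1, u ^ (p - 1) * (1 - u) ^ (q - 1)
      = Real.Gamma p * Real.Gamma q / Real.Gamma (p + q) := by
  have h := Complex.betaIntegral_eq_Gamma_mul_div (u := p) (v := q) (by simpa) (by simpa)
  rw [Complex.betaIntegral, ← integral_congr fun u hu => ofReal_rpow_mul_one_sub_rpow hu,
    integral_ofReal, ← Complex.ofReal_add] at h
  simp only [Complex.Gamma_ofReal] at h
  exact_mod_cast h

variable {τ t : ℝ}

theorem sub_rpow_mul_sub_rpow_eq {s : ℝ} (hτt : τ < t) (hs : s ∈ uIcc τ t) :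
    (t - s) ^ (p - 1) * (s - τ) ^ (q - 1) = (t - τ) ^ (p + q - 2) *
      (((s - τ) / (t - τ)) ^ (q - 1) * (1 - (s - τ) / (t - τ)) ^ (p - 1)) := by
  rw [uIcc_of_le hτt.le] at hs
  have hd : 0 < t - τ := sub_pos.2 hτt
  rw [one_sub_div hd.ne', show t - τ - (s - τ) = t - s by ring,
    Real.div_rpow (sub_nonneg.2 hs.1) hd.le, Real.div_rpow (sub_nonneg.2 hs.2) hd.le,
    show p + q - 2 = (q - 1) + (p - 1) by ring, Real.rpow_add hd]
  field_simp

theorem intervalIntegrable_sub_rpow_mul_sub_rpow (hτt : τ < t) (hp : 0 < p) (hq : 0 < q) :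
    IntervalIntegrable (fun s => (t - s) ^ (p - 1) * (s - τ) ^ (q - 1)) volume τ t := by
  have h := ((intervalIntegrable_rpow_mul_one_sub_rpow hq hp).comp_mul_left
    (c := (t - τ)⁻¹)).comp_sub_right τ
  simp only [div_inv_eq_mul, one_mul, zero_mul, zero_add, sub_add_cancel] at h
  refine (h.const_mul ((t - τ) ^ (p + q - 2))).congr fun s hs => ?_
  simp only [inv_mul_eq_div]
  exact (sub_rpow_mul_sub_rpow_eq hτt (uIoc_subset_uIcc hs)).symm

theorem integral_sub_rpow_mul_sub_rpow (hτt : τ < t) (hp : 0 < p) (hq : 0 < q) :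
    ∫ s in τ..t, (t - s) ^ (p - 1) * (s - τ) ^ (q - 1)
      = Real.Gamma p * Real.Gamma q / Real.Gamma (p + q) * (t - τ) ^ (p + q - 1) := by
  have hd : 0 < t - τ := sub_pos.2 hτt
  rw [integral_congr fun s hs => sub_rpow_mul_sub_rpow_eq hτt hs,
    intervalIntegral.integral_const_mul,
    integral_comp_sub_right (fun x => (x / (t - τ)) ^ (q - 1) * (1 - x / (t - τ)) ^ (p - 1)),
    integral_comp_div (fun u => u ^ (q - 1) * (1 - u) ^ (p - 1)) hd.ne', sub_self, zero_div,
    div_self hd.ne', integral_rpow_mul_one_sub_rpow hq hp, add_comm q p, smul_eq_mul,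
    show p + q - 1 = (p + q - 2) + 1 by ring, Real.rpow_add_one hd.ne']
  ring

end Beta

theorem setIntegral_Ioc_indicator_Ioc {a τ t : ℝ} {g : ℝ → ℝ} (haτ : a ≤ τ) :
    ∫ s in Ioc a t, (Ioc τ t).indicator g s = ∫ s in Ioc τ t, g s := by
  rw [MeasureTheory.integral_indicator measurableSet_Ioc,
    Measure.restrict_restrict measurableSet_Ioc, inter_eq_left.2 (Ioc_subset_Ioc_left haτ)]

theorem setIntegral_Ioc_indicator_Iio {a s t : ℝ} {g : ℝ → ℝ} (hst : s ≤ t) :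
    ∫ τ in Ioc a t, (Iio s).indicator g τ = ∫ τ in Ioc a s, g τ := by
  rw [MeasureTheory.integral_indicator measurableSet_Iio,
    Measure.restrict_restrict measurableSet_Iio, integral_Ioc_eq_integral_Ioo]
  congr 2
  ext τ
  simp only [mem_inter_iff, mem_Iio, mem_Ioc, mem_Ioo]
  grind

theorem ae_mem_Ioo_restrict_Ioc {a t : ℝ} : ∀ᵐ τ ∂volume.restrict (Ioc a t), τ ∈ Ioo a t := by
  rw [← restrict_Ioo_eq_restrict_Ioc]
  exact ae_restrict_mem measurableSet_Ioo

theorem integral_sub_rpow_mul_sub_rpow_neg {τ t p : ℝ} (hτt : τ < t) (hp0 : 0 < p)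
    (hp1 : p < 1) :
    ∫ s in Ioc τ t, (t - s) ^ (p - 1) * (s - τ) ^ (-p) = Real.Gamma p * Real.Gamma (1 - p) := by
  have h := integral_sub_rpow_mul_sub_rpow hτt hp0 (sub_pos.2 hp1)
  rwa [sub_sub_cancel_left, add_sub_cancel, sub_self, Real.rpow_zero, Real.Gamma_one,
    div_one, mul_one, integral_of_le hτt.le] at h

theorem integrableOn_sub_rpow_mul_sub_rpow_neg {τ t p : ℝ} (hτt : τ < t) (hp0 : 0 < p)
    (hp1 : p < 1) :
    IntegrableOn (fun s => (t - s) ^ (p - 1) * (s - τ) ^ (-p)) (Ioc τ t) := by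
  have h := intervalIntegrable_sub_rpow_mul_sub_rpow hτt hp0 (sub_pos.2 hp1)
  rwa [sub_sub_cancel_left, intervalIntegrable_iff_integrableOn_Ioc_of_le hτt.le] at h

-- For fixed `τ`, the kernel in `s` of `∫_a^t (t - s)^(p - 1) ∫_a^s (s - τ)^(-p) D τ dτ ds`.
noncomputable def complementaryKernel (t p τ : ℝ) : ℝ → ℝ :=
  (Ioc τ t).indicator fun s => (t - s) ^ (p - 1) * (s - τ) ^ (-p)

section complementaryKernel

variable {a t p τ : ℝ}

theorem complementaryKernel_nonneg (s : ℝ) : 0 ≤ complementaryKernel t p τ s :=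
  indicator_nonneg (fun _ hs => mul_nonneg (Real.rpow_nonneg (sub_nonneg.2 hs.2) _)
    (Real.rpow_nonneg (sub_nonneg.2 hs.1.le) _)) s

theorem integrable_complementaryKernel (hp0 : 0 < p) (hp1 : p < 1) (hτ : τ ∈ Ioo a t) :
    Integrable (complementaryKernel t p τ) (volume.restrict (Ioc a t)) := by
  rw [complementaryKernel, integrable_indicator_iff measurableSet_Ioc]
  exact (integrableOn_sub_rpow_mul_sub_rpow_neg hτ.2 hp0 hp1).restrict

theorem integral_complementaryKernel (hp0 : 0 < p) (hp1 : p < 1) (hτ : τ ∈ Ioo a t) :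
    ∫ s in Ioc a t, complementaryKernel t p τ s = Real.Gamma p * Real.Gamma (1 - p) := by
  rw [complementaryKernel, setIntegral_Ioc_indicator_Ioc hτ.1.le,
    integral_sub_rpow_mul_sub_rpow_neg hτ.2 hp0 hp1]

theorem measurable_complementaryKernel_uncurry :
    Measurable fun x : ℝ × ℝ => complementaryKernel t p x.2 x.1 := by
  simp only [complementaryKernel, indicator_apply, mem_Ioc]
  refine Measurable.ite ?_ (by fun_prop) measurable_const
  exact (measurableSet_lt measurable_snd measurable_fst).inter
    (measurableSet_le measurable_fst measurable_const)

theorem integrable_complementaryKernel_mul {D : ℝ → ℝ} (hp0 : 0 < p) (hp1 : p < 1)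
    (hD : IntegrableOn D (Ioc a t)) :
    Integrable (fun x : ℝ × ℝ => complementaryKernel t p x.2 x.1 * D x.2)
      ((volume.restrict (Ioc a t)).prod (volume.restrict (Ioc a t))) := by
  have hmeas : AEStronglyMeasurable (fun x : ℝ × ℝ => complementaryKernel t p x.2 x.1 * D x.2)
      ((volume.restrict (Ioc a t)).prod (volume.restrict (Ioc a t))) :=
    measurable_complementaryKernel_uncurry.aestronglyMeasurable.mul
      hD.aestronglyMeasurable.comp_snd
  refine (integrable_prod_iff' hmeas).2 ⟨?_, ?_⟩
  · filter_upwards [ae_mem_Ioo_restrict_Ioc] with τ hτ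
    exact (integrable_complementaryKernel hp0 hp1 hτ).mul_const (D τ)
  · refine (hD.norm.const_mul (Real.Gamma p * Real.Gamma (1 - p))).congr ?_
    filter_upwards [ae_mem_Ioo_restrict_Ioc] with τ hτ
    simp only [norm_mul, Real.norm_of_nonneg (complementaryKernel_nonneg _),
      MeasureTheory.integral_mul_const, integral_complementaryKernel hp0 hp1 hτ]

end complementaryKernel

theorem integral_sub_rpow_mul_integral_sub_rpow_mul {a t p : ℝ} {D : ℝ → ℝ} (hp0 : 0 < p)
    (hp1 : p < 1) (hat : a ≤ t) (hD : IntegrableOn D (Ioc a t)) :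
    ∫ s in a..t, (t - s) ^ (p - 1) * ∫ τ in a..s, (s - τ) ^ (-p) * D τ
      = Real.Gamma p * Real.Gamma (1 - p) * ∫ τ in a..t, D τ := by
  set μ := volume.restrict (Ioc a t)
  have h_section : ∀ s ∈ Ioc a t, (t - s) ^ (p - 1) * ∫ τ in a..s, (s - τ) ^ (-p) * D τ
      = ∫ τ, complementaryKernel t p τ s * D τ ∂μ := fun s hs => by
    have h_indicator : (fun τ => complementaryKernel t p τ s * D τ)
        = (Iio s).indicator fun τ => (t - s) ^ (p - 1) * ((s - τ) ^ (-p) * D τ) := by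
      ext τ
      simp only [complementaryKernel, indicator_apply, mem_Ioc, mem_Iio, hs.2, and_true]
      split_ifs <;> ring
    rw [h_indicator, setIntegral_Ioc_indicator_Iio hs.2, MeasureTheory.integral_const_mul,
      integral_of_le hs.1.le]
  calc ∫ s in a..t, (t - s) ^ (p - 1) * ∫ τ in a..s, (s - τ) ^ (-p) * D τ
      = ∫ s, ∫ τ, complementaryKernel t p τ s * D τ ∂μ ∂μ := by
        rw [integral_of_le hat]
        exact setIntegral_congr_fun measurableSet_Ioc h_section
    _ = ∫ τ, ∫ s, complementaryKernel t p τ s * D τ ∂μ ∂μ :=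
        integral_integral_swap (integrable_complementaryKernel_mul hp0 hp1 hD)
    _ = ∫ τ, Real.Gamma p * Real.Gamma (1 - p) * D τ ∂μ := by
        refine integral_congr_ae ?_
        filter_upwards [ae_mem_Ioo_restrict_Ioc] with τ hτ
        rw [MeasureTheory.integral_mul_const, integral_complementaryKernel hp0 hp1 hτ]
    _ = Real.Gamma p * Real.Gamma (1 - p) * ∫ τ in a..t, D τ := by
        rw [MeasureTheory.integral_const_mul, integral_of_le hat]

theorem ContDiffOn.integrableOn_deriv {f : ℝ → ℝ} {a b : ℝ} (hf : ContDiffOn ℝ 1 f (Icc a b)) :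
    IntegrableOn (deriv f) (Ioc a b) := by
  rcases le_or_gt b a with hba | hab
  · simp [Ioc_eq_empty_of_le hba]
  have h := ((hf.continuousOn_derivWithin (uniqueDiffOn_Icc hab) le_rfl).integrableOn_Icc
    (μ := volume)).mono_set Ioo_subset_Icc_self
  rw [integrableOn_Ioc_iff_integrableOn_Ioo]
  exact h.congr_fun (fun x hx => derivWithin_of_mem_nhds (Icc_mem_nhds hx.1 hx.2))
    measurableSet_Ioo

theorem integral_sub_rpow {a t α : ℝ} (hα : 0 < α) :
    ∫ s in a..t, (t - s) ^ (α - 1) = (t - a) ^ α / α := by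
  rw [integral_comp_sub_left (fun x => x ^ (α - 1)), sub_self,
    integral_rpow (Or.inl (by linarith)), sub_add_cancel, Real.zero_rpow hα.ne']
  ring

theorem intervalIntegrable_sub_rpow {a t α : ℝ} (hα : 0 < α) :
    IntervalIntegrable (fun s => (t - s) ^ (α - 1)) volume a t := by
  simpa using (intervalIntegrable_rpow' (a := t - a) (b := t - t)
    (by linarith : (-1 : ℝ) < α - 1)).comp_sub_left t

theorem exists_integral_mul_eq_mul_integral {a b : ℝ} {w g : ℝ → ℝ} (hab : a ≤ b)
    (hw : IntervalIntegrable w volume a b) (hw0 : ∀ x ∈ Icc a b, 0 ≤ w x)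
    (hg : ContinuousOn g (Icc a b)) :
    ∃ ξ ∈ Icc a b, ∫ x in a..b, w x * g x = g ξ * ∫ x in a..b, w x := by
  have hne : (Icc a b).Nonempty := nonempty_Icc.2 hab
  obtain ⟨ξ₁, hξ₁, hmin⟩ := isCompact_Icc.exists_isMinOn hne hg
  obtain ⟨ξ₂, hξ₂, hmax⟩ := isCompact_Icc.exists_isMaxOn hne hg
  have hwg : IntervalIntegrable (fun x => w x * g x) volume a b :=
    hw.mul_continuousOn (by rwa [uIcc_of_le hab])
  have hlow : g ξ₁ * ∫ x in a..b, w x ≤ ∫ x in a..b, w x * g x := by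
    rw [← intervalIntegral.integral_const_mul]
    refine integral_mono_on hab (hw.const_mul _) hwg fun x hx => ?_
    rw [mul_comm]
    exact mul_le_mul_of_nonneg_left (hmin hx) (hw0 x hx)
  have hhigh : ∫ x in a..b, w x * g x ≤ g ξ₂ * ∫ x in a..b, w x := by
    rw [← intervalIntegral.integral_const_mul]
    refine integral_mono_on hab hwg (hw.const_mul _) fun x hx => ?_
    rw [mul_comm (g ξ₂)]
    exact mul_le_mul_of_nonneg_left (hmax hx) (hw0 x hx)
  rcases (integral_nonneg hab hw0).eq_or_lt with hW | hW
  · exact ⟨a, left_mem_Icc.2 hab, by rw [← hW] at hlow hhigh ⊢; linarith⟩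
  obtain ⟨ξ, hξ, hgξ⟩ := isPreconnected_Icc.intermediate_value hξ₁ hξ₂ hg
    ⟨(le_div_iff₀ hW).2 hlow, (div_le_iff₀ hW).2 hhigh⟩
  exact ⟨ξ, hξ, by rw [hgξ, div_mul_cancel₀ _ hW.ne']⟩

theorem integral_sub_rpow_mul_caputoAt {a t α : ℝ} {f : ℝ → ℝ} (hα0 : 0 < α) (hα1 : α < 1)
    (hat : a ≤ t) (hf : ContDiffOn ℝ 1 f (Icc a t)) :
    ∫ s in a..t, (t - s) ^ (α - 1) * caputoAt a α f s = Real.Gamma α * (f t - f a) := by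
  have hΓ : Real.Gamma (1 - α) ≠ 0 := (Real.Gamma_pos_of_pos (sub_pos.2 hα1)).ne'
  simp only [caputoAt, if_neg hα1.ne, mul_left_comm _ (1 / Real.Gamma (1 - α))]
  rw [intervalIntegral.integral_const_mul,
    integral_sub_rpow_mul_integral_sub_rpow_mul hα0 hα1 hat hf.integrableOn_deriv,
    integral_deriv_of_contDiffOn_Icc hf hat]
  field_simp

theorem exists_eq_add_mul_caputoAt_of_lt_one {a t α : ℝ} {f : ℝ → ℝ} (hα0 : 0 < α) (hα1 : α < 1)
    (hat : a < t) (hf : ContDiffOn ℝ 1 f (Icc a t))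
    (hcont : ContinuousOn (caputoAt a α f) (Icc a t)) :
    ∃ ξ ∈ Icc a t, f t = f a + ((t - a) ^ α / Real.Gamma (α + 1)) * caputoAt a α f ξ := by
  obtain ⟨ξ, hξ, hmean⟩ := exists_integral_mul_eq_mul_integral hat.le
    (intervalIntegrable_sub_rpow hα0)
    (fun s hs => Real.rpow_nonneg (sub_nonneg.2 hs.2) _) hcont
  refine ⟨ξ, hξ, ?_⟩
  rw [integral_sub_rpow_mul_caputoAt hα0 hα1 hat.le hf, integral_sub_rpow hα0] at hmean
  rw [Real.Gamma_add_one hα0.ne']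
  field_simp at hmean ⊢
  linarith

theorem exists_eq_add_mul_caputoAt_one {a t : ℝ} {f : ℝ → ℝ} (hat : a < t)
    (hf : ContDiffOn ℝ 1 f (Icc a t)) :
    ∃ ξ ∈ Icc a t, f t = f a + ((t - a) ^ (1 : ℝ) / Real.Gamma (1 + 1)) * caputoAt a 1 f ξ := by
  obtain ⟨ξ, hξ, hslope⟩ := exists_deriv_eq_slope f hat hf.continuousOn
    ((hf.differentiableOn one_ne_zero).mono Ioo_subset_Icc_self)
  refine ⟨ξ, Ioo_subset_Icc_self hξ, ?_⟩
  rw [caputoAt, if_pos rfl, hslope, Real.rpow_one, one_add_one_eq_two, Real.Gamma_two,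
    div_one, mul_div_cancel₀ _ (sub_pos.2 hat).ne']
  ring

theorem generalized_taylor_one_term_general (a b α : ℝ)
    (hα0 : 0 < α) (hα1 : α ≤ 1) (f : ℝ → ℝ)
    (hf : ContDiffOn ℝ 1 f (Set.Icc a b))
    (hcont : ContinuousOn (caputoAt a α f) (Set.Icc a b)) :
    ∀ t ∈ Set.Ioc a b, ∃ ξ ∈ Set.Icc a t,
      f t = f a + ((t - a) ^ α / Real.Gamma (α + 1)) * caputoAt a α f ξ := by
  intro t ht
  have hsub : Icc a t ⊆ Icc a b := Icc_subset_Icc_right ht.2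
  rcases hα1.lt_or_eq with hα1 | rfl
  · exact exists_eq_add_mul_caputoAt_of_lt_one hα0 hα1 ht.1 (hf.mono hsub) (hcont.mono hsub)
  · exact exists_eq_add_mul_caputoAt_one ht.1 (hf.mono hsub)

/-- Generalized Taylor formula with one term: if `0 < α ≤ 1`, `f` is continuously
differentiable on `[a,b]`, and `D_a^α f` is continuous and bounded on `[a,b]`,
then for every `t ∈ (a, b]` there is `ξ ∈ [a, t]` with
`f t = f a + (t - a)^α / Γ(α+1) * (D_a^α f) ξ`. -/
theorem generalized_taylor_one_term (a b α : ℝ) (hab : a < b)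
    (hα0 : 0 < α) (hα1 : α ≤ 1) (f : ℝ → ℝ)
    (hf : ContDiffOn ℝ 1 f (Set.Icc a b))
    (hcont : ContinuousOn (caputoAt a α f) (Set.Icc a b))
    (hbdd : ∃ M : ℝ, ∀ t ∈ Set.Icc a b, |caputoAt a α f t| ≤ M) :
    ∀ t ∈ Set.Ioc a b, ∃ ξ ∈ Set.Icc a t,
      f t = f a + ((t - a) ^ α / Real.Gamma (α + 1)) * caputoAt a α f ξ :=
  generalized_taylor_one_term_general a b α hα0 hα1 f hf hcont
end
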